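/- arXiv:2102.08935 — 4 statements merged into one kernel-verified Lean document; each statement's English description precedes it below -/
import Mathlib

section
/- Let W_0, W_1, ..., W_n be independent standard exponential random variables, 0 < q < 1, and K_n = ∑_{i=0}^n q^i W_i. Then for all t ≥ 0, P(K_n > t) = ∑_{j=0}^n ((-1)^j q^{j(j+1)/2} / (φ_j(q) φ_{n-j}(q))) · exp(-q^{-j} t). -/
/-!
Let `c_{n,j}` be the coefficient of `e^{-q^{-j} t}` in the formula and `S_n(t)` its right-hand side.
Induct on `n`: `K_{n+1} = K_n + Y` with `Y = q^{n+1} W_{n+1}` exponential of rate `r = q^{-(n+1)}`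
and independent of `K_n ≥ 0`, so conditioning on `Y` gives
`P(K_{n+1} > t) = e^{-rt} + ∫_0^t r e^{-ry} S_n(t - y) dy`. As `r ≠ q^{-j}` for `j ≤ n`, the
integral turns `c_{n,j} e^{-q^{-j} t}` into `c_{n,j} / (1 - q^{n+1-j}) = c_{n+1,j}` times
`e^{-q^{-j} t} - e^{-rt}`. The resulting coefficient `1 - ∑_{j ≤ n} c_{n+1,j}` of `e^{-rt}` is
`c_{n+1,n+1}` because `∑_j c_{n+1,j} = 1`, the case `x = 1` of the `q`-binomial theorem
`φ_n ∑_j c_{n,j} x^j = ∏_{i=1}^n (1 - q^i x)`.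
-/

open MeasureTheory ProbabilityTheory Real Set Finset

noncomputable def qPochhammer (q : ℝ) (m : ℕ) : ℝ := ∏ i ∈ Icc 1 m, (1 - q ^ i)

noncomputable def survivalCoeff (q : ℝ) (n j : ℕ) : ℝ :=
  (-1) ^ j * q ^ (j * (j + 1) / 2) / (qPochhammer q j * qPochhammer q (n - j))

noncomputable def survivalSum (q : ℝ) (n : ℕ) (t : ℝ) : ℝ :=
  ∑ j ∈ range (n + 1), survivalCoeff q n j * exp (-((q ^ j)⁻¹ * t))

@[simp] lemma qPochhammer_zero (q : ℝ) : qPochhammer q 0 = 1 := by simp [qPochhammer]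

lemma qPochhammer_succ (q : ℝ) (m : ℕ) :
    qPochhammer q (m + 1) = qPochhammer q m * (1 - q ^ (m + 1)) := by
  rw [qPochhammer, prod_Icc_succ_top (by omega), ← qPochhammer]

lemma qPochhammer_eq_prod_range (q : ℝ) (m : ℕ) :
    qPochhammer q m = ∏ i ∈ range m, (1 - q ^ (i + 1)) := by
  induction m with
  | zero => simp
  | succ m ih => rw [qPochhammer_succ, ih, prod_range_succ]

lemma one_sub_pow_pos {q : ℝ} (hq0 : 0 ≤ q) (hq1 : q < 1) {k : ℕ} (hk : k ≠ 0) :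
    0 < 1 - q ^ k :=
  sub_pos.2 (pow_lt_one₀ hq0 hq1 hk)

lemma qPochhammer_pos {q : ℝ} (hq0 : 0 ≤ q) (hq1 : q < 1) (m : ℕ) : 0 < qPochhammer q m :=
  prod_pos fun i hi => one_sub_pow_pos hq0 hq1 (by simp at hi; omega)

section SurvivalCoeff

variable {q : ℝ}

lemma survivalCoeff_eq_mul_succ (hq0 : 0 ≤ q) (hq1 : q < 1) {n j : ℕ} (hj : j ≤ n) :
    survivalCoeff q n j = (1 - q ^ (n + 1 - j)) * survivalCoeff q (n + 1) j := by
  have := (qPochhammer_pos hq0 hq1 j).ne'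
  have := (qPochhammer_pos hq0 hq1 (n - j)).ne'
  have := (one_sub_pow_pos hq0 hq1 (k := n - j + 1) (by omega)).ne'
  rw [survivalCoeff, survivalCoeff, show n + 1 - j = n - j + 1 by omega, qPochhammer_succ]
  field_simp

lemma pow_mul_survivalCoeff (hq0 : 0 ≤ q) (hq1 : q < 1) {n j : ℕ} (hj : j ≤ n) :
    q ^ (j + 1) * survivalCoeff q n j = -(1 - q ^ (j + 1)) * survivalCoeff q (n + 1) (j + 1) := by
  have := (qPochhammer_pos hq0 hq1 j).ne'
  have := (qPochhammer_pos hq0 hq1 (n - j)).ne'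
  have := (one_sub_pow_pos hq0 hq1 (k := j + 1) (by omega)).ne'
  have htri : (j + 1) * (j + 1 + 1) / 2 = j * (j + 1) / 2 + (j + 1) := by
    have := (Nat.even_mul_succ_self j).two_dvd
    grind
  rw [survivalCoeff, survivalCoeff, htri, show n + 1 - (j + 1) = n - j by omega, qPochhammer_succ,
    pow_add q _ (j + 1), pow_succ (-1 : ℝ)]
  field_simp

lemma one_sub_pow_mul_sum_survivalCoeff_succ (hq0 : 0 ≤ q) (hq1 : q < 1) (n : ℕ) (x : ℝ) :
    (1 - q ^ (n + 1)) * ∑ j ∈ range (n + 2), survivalCoeff q (n + 1) j * x ^ j =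
      (1 - q * x) * ∑ j ∈ range (n + 1), survivalCoeff q n j * (q * x) ^ j := by
  have hlow : ∑ j ∈ range (n + 1), survivalCoeff q n j * (q * x) ^ j =
      ∑ j ∈ range (n + 2), (q ^ j - q ^ (n + 1)) * survivalCoeff q (n + 1) j * x ^ j := by
    rw [sum_range_succ _ (n + 1), sub_self, zero_mul, zero_mul, add_zero]
    refine sum_congr rfl fun j hj => ?_
    have hj := mem_range_succ_iff.1 hj
    rw [survivalCoeff_eq_mul_succ hq0 hq1 hj, mul_pow,
      show q ^ (n + 1) = q ^ j * q ^ (n + 1 - j) by rw [← pow_add]; congr 1; omega]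
    ring
  have hhigh : q * x * ∑ j ∈ range (n + 1), survivalCoeff q n j * (q * x) ^ j =
      ∑ j ∈ range (n + 2), (q ^ j - 1) * survivalCoeff q (n + 1) j * x ^ j := by
    rw [sum_range_succ' _ (n + 1), pow_zero, sub_self, zero_mul, zero_mul, add_zero, mul_sum]
    refine sum_congr rfl fun j hj => ?_
    rw [mul_pow]
    linear_combination x ^ (j + 1) * pow_mul_survivalCoeff hq0 hq1 (mem_range_succ_iff.1 hj)
  rw [sub_mul 1 (q * x), one_mul, hhigh, hlow, ← sum_sub_distrib, mul_sum]
  exact sum_congr rfl fun j _ => by ring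

lemma qPochhammer_mul_sum_survivalCoeff (hq0 : 0 ≤ q) (hq1 : q < 1) (n : ℕ) (x : ℝ) :
    qPochhammer q n * ∑ j ∈ range (n + 1), survivalCoeff q n j * x ^ j =
      ∏ i ∈ range n, (1 - q ^ (i + 1) * x) := by
  induction n generalizing x with
  | zero => simp [survivalCoeff]
  | succ n ih =>
    rw [qPochhammer_succ, mul_assoc, one_sub_pow_mul_sum_survivalCoeff_succ hq0 hq1,
      mul_left_comm, ih, prod_range_succ', zero_add, pow_one, mul_comm]
    exact congrArg (· * _) (prod_congr rfl fun i _ => by ring)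

lemma sum_survivalCoeff (hq0 : 0 ≤ q) (hq1 : q < 1) (n : ℕ) :
    ∑ j ∈ range (n + 1), survivalCoeff q n j = 1 := by
  have h := qPochhammer_mul_sum_survivalCoeff hq0 hq1 n 1
  simp only [one_pow, mul_one, ← qPochhammer_eq_prod_range] at h
  exact (mul_eq_left₀ (qPochhammer_pos hq0 hq1 n).ne').1 h

lemma survivalCoeff_mul_rate_ratio (hq0 : 0 < q) (hq1 : q < 1) {n j : ℕ} (hj : j ≤ n) :
    survivalCoeff q n j * ((q ^ (n + 1))⁻¹ / ((q ^ j)⁻¹ - (q ^ (n + 1))⁻¹)) =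
      -survivalCoeff q (n + 1) j := by
  have hsplit : q ^ (n + 1) = q ^ j * q ^ (n + 1 - j) := by rw [← pow_add]; congr 1; omega
  have hpos := one_sub_pow_pos hq0.le hq1 (k := n + 1 - j) (by omega)
  have : q ^ (n + 1 - j) - 1 ≠ 0 := by linarith
  have hratio :
      (q ^ (n + 1))⁻¹ / ((q ^ j)⁻¹ - (q ^ (n + 1))⁻¹) = -(1 - q ^ (n + 1 - j))⁻¹ := by
    rw [hsplit]
    field_simp
    ring
  rw [survivalCoeff_eq_mul_succ hq0.le hq1 hj, hratio, mul_comm, ← mul_assoc,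
    neg_mul, inv_mul_cancel₀ hpos.ne', neg_one_mul]

lemma exp_add_sum_survivalCoeff_mul (hq0 : 0 < q) (hq1 : q < 1) (n : ℕ) (t : ℝ) :
    exp (-((q ^ (n + 1))⁻¹ * t)) + ∑ j ∈ range (n + 1), survivalCoeff q n j *
      ((q ^ (n + 1))⁻¹ / ((q ^ j)⁻¹ - (q ^ (n + 1))⁻¹) *
        (exp (-((q ^ (n + 1))⁻¹ * t)) - exp (-((q ^ j)⁻¹ * t)))) =
      survivalSum q (n + 1) t := by
  have hterm : ∀ j ∈ range (n + 1), survivalCoeff q n j *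
      ((q ^ (n + 1))⁻¹ / ((q ^ j)⁻¹ - (q ^ (n + 1))⁻¹) *
        (exp (-((q ^ (n + 1))⁻¹ * t)) - exp (-((q ^ j)⁻¹ * t)))) =
      survivalCoeff q (n + 1) j * exp (-((q ^ j)⁻¹ * t)) -
        survivalCoeff q (n + 1) j * exp (-((q ^ (n + 1))⁻¹ * t)) := fun j hj => by
    rw [← mul_assoc, survivalCoeff_mul_rate_ratio hq0 hq1 (mem_range_succ_iff.1 hj)]
    ring
  have htop := sum_survivalCoeff hq0.le hq1 (n + 1)
  rw [sum_range_succ] at htop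
  rw [sum_congr rfl hterm, sum_sub_distrib, ← sum_mul, survivalSum, sum_range_succ _ (n + 1)]
  linear_combination -exp (-((q ^ (n + 1))⁻¹ * t)) * htop

end SurvivalCoeff

lemma integral_exp_mul_exp_sub {r l : ℝ} (hlr : l ≠ r) (t : ℝ) :
    ∫ y in 0..t, r * exp (-(r * y)) * exp (-(l * (t - y))) =
      r / (l - r) * (exp (-(r * t)) - exp (-(l * t))) := by
  have hlr' : l - r ≠ 0 := sub_ne_zero.2 hlr
  have hfactor : ∀ y, r * exp (-(r * y)) * exp (-(l * (t - y))) =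
      r * exp (-(l * t)) * exp ((l - r) * y) := fun y => by
    rw [mul_assoc, mul_assoc, ← exp_add, ← exp_add]; ring_nf
  simp_rw [hfactor, intervalIntegral.integral_const_mul,
    intervalIntegral.integral_comp_mul_left (fun y => exp y) hlr', integral_exp, mul_zero,
    exp_zero, smul_eq_mul]
  rw [show -(r * t) = -(l * t) + (l - r) * t by ring, exp_add]
  field_simp

lemma survivalSum_succ {q : ℝ} (hq0 : 0 < q) (hq1 : q < 1) (n : ℕ) (t : ℝ) :
    survivalSum q (n + 1) t = exp (-((q ^ (n + 1))⁻¹ * t)) +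
      ∫ y in 0..t,
        (q ^ (n + 1))⁻¹ * exp (-((q ^ (n + 1))⁻¹ * y)) * survivalSum q n (t - y) := by
  rw [← exp_add_sum_survivalCoeff_mul hq0 hq1 n t]
  simp_rw [survivalSum, mul_sum, mul_left_comm _ (survivalCoeff q n _)]
  rw [intervalIntegral.integral_finsetSum
    fun j _ => (by fun_prop : Continuous _).intervalIntegrable _ _]
  refine congrArg _ (sum_congr rfl fun j hj => ?_)
  have hlt := pow_lt_pow_right_of_lt_one₀ hq0 hq1 (mem_range.1 hj)
  rw [intervalIntegral.integral_const_mul,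
    integral_exp_mul_exp_sub fun h => hlt.ne' (inv_injective h)]

lemma ae_nonneg_expMeasure (r : ℝ) : ∀ᵐ y ∂expMeasure r, 0 ≤ y := by
  simp only [ae_iff, not_le]
  change expMeasure r (Iio 0) = 0
  rw [expMeasure, gammaMeasure, withDensity_apply _ measurableSet_Iio]
  exact lintegral_exponentialPDF_of_nonpos le_rfl

lemma measureReal_Ioi_expMeasure {r : ℝ} (hr : 0 < r) {t : ℝ} (ht : 0 ≤ t) :
    (expMeasure r).real (Ioi t) = exp (-(r * t)) := by
  have := isProbabilityMeasure_expMeasure hr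
  rw [← compl_Iic, probReal_compl_eq_one_sub measurableSet_Iic, ← cdf_eq_real,
    cdf_expMeasure_eq hr, if_pos ht, sub_sub_cancel]

lemma map_const_mul_expMeasure {c r : ℝ} (hc : 0 < c) (hr : 0 < r) :
    (expMeasure r).map (c * ·) = expMeasure (r / c) := by
  have := isProbabilityMeasure_expMeasure hr
  have := isProbabilityMeasure_expMeasure (div_pos hr hc)
  have hmeas : Measurable (c * · : ℝ → ℝ) := measurable_const_mul c
  have := Measure.isProbabilityMeasure_map (μ := expMeasure r) hmeas.aemeasurable
  refine Measure.eq_of_cdf _ _ (StieltjesFunction.ext fun x => ?_)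
  have hpre : (c * · : ℝ → ℝ) ⁻¹' Iic x = Iic (x / c) := by
    ext y; simp [le_div_iff₀' hc]
  rw [cdf_eq_real, map_measureReal_apply hmeas measurableSet_Iic, hpre, ← cdf_eq_real,
    cdf_expMeasure_eq hr, cdf_expMeasure_eq (div_pos hr hc), mul_div_assoc', div_mul_eq_mul_div]
  simp only [div_nonneg_iff, hc.le, hc.not_ge, and_true, and_false, or_false]

lemma integral_expMeasure_eq_add_intervalIntegral {r t : ℝ} (hr : 0 < r) (ht : 0 ≤ t)
    {g : ℝ → ℝ} (hg : Integrable g (expMeasure r)) (hg_one : ∀ y, t < y → g y = 1) :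
    ∫ y, g y ∂expMeasure r = exp (-(r * t)) + ∫ y in 0..t, r * exp (-(r * y)) * g y := by
  have hIoi : ∫ y in Ioi t, g y ∂expMeasure r = exp (-(r * t)) := by
    rw [setIntegral_congr_fun measurableSet_Ioi hg_one, setIntegral_const, smul_eq_mul, mul_one,
      measureReal_Ioi_expMeasure hr ht]
  have hIic : ∫ y in Iic t, g y ∂expMeasure r = ∫ y in Icc 0 t, g y ∂expMeasure r := by
    refine setIntegral_congr_set (Filter.eventuallyEq_set.2 ?_)
    filter_upwards [ae_nonneg_expMeasure r] with y hy
    simp [hy]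
  have hdensity :
      ∫ y in Icc 0 t, g y ∂expMeasure r = ∫ y in Icc 0 t, r * exp (-(r * y)) * g y := by
    rw [expMeasure, gammaMeasure, setIntegral_withDensity_eq_setIntegral_toReal_smul
      (f := gammaPDF 1 r) (measurable_gammaPDFReal 1 r).ennreal_ofReal
      (ae_of_all _ fun _ => ENNReal.ofReal_lt_top) g measurableSet_Icc]
    refine setIntegral_congr_fun measurableSet_Icc fun y hy => ?_
    rw [show gammaPDF 1 r y = exponentialPDF r y from rfl, exponentialPDF_of_nonneg hy.1,
      ENNReal.toReal_ofReal (by positivity), smul_eq_mul]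
  rw [← integral_add_compl measurableSet_Ioi hg, hIoi, compl_Ioi, hIic, hdensity,
    integral_Icc_eq_integral_Ioc, intervalIntegral.integral_of_le ht]

section Convolution

variable {Ω : Type*} [MeasurableSpace Ω] {μ : Measure Ω} [IsProbabilityMeasure μ]

lemma measureReal_lt_add_eq_integral {X Y : Ω → ℝ} (hX : Measurable X) (hY : Measurable Y)
    (hXY : IndepFun X Y μ) (t : ℝ) :
    μ.real {ω | t < X ω + Y ω} = ∫ y, μ.real {ω | t - y < X ω} ∂μ.map Y := by
  have hS : MeasurableSet {p : ℝ × ℝ | t < p.1 + p.2} :=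
    measurableSet_lt measurable_const (measurable_fst.add measurable_snd)
  have hlintegral : μ {ω | t < X ω + Y ω} = ∫⁻ y, μ {ω | t - y < X ω} ∂μ.map Y := by
    rw [show {ω | t < X ω + Y ω} = (fun ω => (X ω, Y ω)) ⁻¹' {p | t < p.1 + p.2} from rfl,
      ← Measure.map_apply (hX.prodMk hY) hS,
      (indepFun_iff_map_prod_eq_prod_map_map hX.aemeasurable hY.aemeasurable).1 hXY,
      Measure.prod_apply_symm hS]
    refine lintegral_congr fun y => ?_
    have hslice : (fun x => (x, y)) ⁻¹' {p : ℝ × ℝ | t < p.1 + p.2} = Ioi (t - y) := by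
      ext; simp [sub_lt_iff_lt_add]
    rw [hslice, Measure.map_apply hX measurableSet_Ioi]
    rfl
  have hmono : Monotone fun y => μ {ω | t - y < X ω} :=
    fun a b hab => measure_mono fun ω (h : t - a < X ω) => show t - b < X ω by linarith
  rw [measureReal_def, hlintegral,
    ← integral_toReal hmono.measurable.aemeasurable (ae_of_all _ fun _ => measure_lt_top _ _)]
  rfl

lemma measureReal_lt_add_expMeasure {X Y : Ω → ℝ} (hX : Measurable X) (hY : Measurable Y)
    (hXY : IndepFun X Y μ) (hX0 : ∀ᵐ ω ∂μ, 0 ≤ X ω) {r : ℝ} (hr : 0 < r)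
    (hYlaw : μ.map Y = expMeasure r) {t : ℝ} (ht : 0 ≤ t) :
    μ.real {ω | t < X ω + Y ω} =
      exp (-(r * t)) + ∫ y in 0..t, r * exp (-(r * y)) * μ.real {ω | t - y < X ω} := by
  have := isProbabilityMeasure_expMeasure hr
  have hmono : Monotone fun y => μ.real {ω | t - y < X ω} :=
    fun a b hab => measureReal_mono fun ω (h : t - a < X ω) => show t - b < X ω by linarith
  have hint : Integrable (fun y => μ.real {ω | t - y < X ω}) (expMeasure r) :=
    .of_bound hmono.measurable.aestronglyMeasurable 1 (ae_of_all _ fun y => by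
      rw [Real.norm_of_nonneg measureReal_nonneg]; exact measureReal_le_one)
  have hone : ∀ y, t < y → μ.real {ω | t - y < X ω} = 1 := fun y hy => by
    have hae : {ω | t - y < X ω} =ᵐ[μ] univ :=
      Filter.eventuallyEq_set.2 (hX0.mono fun ω hω =>
        iff_of_true (show t - y < X ω by linarith) trivial)
    rw [measureReal_congr hae, probReal_univ]
  rw [measureReal_lt_add_eq_integral hX hY hXY, hYlaw,
    integral_expMeasure_eq_add_intervalIntegral hr ht hint hone]

lemma measureReal_lt_sum_pow_mul {q : ℝ} (hq0 : 0 < q) (hq1 : q < 1) {W : ℕ → Ω → ℝ}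
    (hW : ∀ i, Measurable (W i)) (hindep : iIndepFun W μ)
    (hlaw : ∀ i, μ.map (W i) = expMeasure 1) (n : ℕ) {t : ℝ} (ht : 0 ≤ t) :
    μ.real {ω | t < ∑ i ∈ range (n + 1), q ^ i * W i ω} = survivalSum q n t := by
  induction n generalizing t with
  | zero =>
    have := measureReal_Ioi_expMeasure one_pos ht
    rw [← hlaw 0, map_measureReal_apply (hW 0) measurableSet_Ioi] at this
    simpa [survivalSum, survivalCoeff, Set.preimage] using this
  | succ n ih =>
    have hYlaw : μ.map (fun ω => q ^ (n + 1) * W (n + 1) ω) = expMeasure (q ^ (n + 1))⁻¹ := by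
      change μ.map ((q ^ (n + 1) * ·) ∘ W (n + 1)) = _
      rw [← Measure.map_map (measurable_const_mul _) (hW _), hlaw,
        map_const_mul_expMeasure (by positivity) one_pos, one_div]
    have hXY : IndepFun (fun ω => ∑ i ∈ range (n + 1), q ^ i * W i ω)
        (fun ω => q ^ (n + 1) * W (n + 1) ω) μ := by
      convert (hindep.comp (fun i x => q ^ i * x) fun i => measurable_const_mul _)
        |>.indepFun_finsetSum_of_notMem (fun i => measurable_const_mul _ |>.comp (hW i))
          (notMem_range_self (n := n + 1)) using 1
      · ext ω
        simp [Finset.sum_apply]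
      · rfl
    have hX0 : ∀ᵐ ω ∂μ, 0 ≤ ∑ i ∈ range (n + 1), q ^ i * W i ω := by
      have hW0 : ∀ i, ∀ᵐ ω ∂μ, 0 ≤ W i ω := fun i =>
        ae_of_ae_map (hW i).aemeasurable (by rw [hlaw i]; exact ae_nonneg_expMeasure 1)
      filter_upwards [ae_all_iff.2 hW0] with ω hω
      exact sum_nonneg fun i _ => mul_nonneg (by positivity) (hω i)
    conv_lhs => simp only [sum_range_succ _ (n + 1)]
    rw [measureReal_lt_add_expMeasure (by fun_prop) (by fun_prop) hXY hX0 (by positivity) hYlaw ht,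
      survivalSum_succ hq0 hq1]
    refine congrArg _ (intervalIntegral.integral_congr fun y hy => ?_)
    rw [uIcc_of_le ht] at hy
    simp only [ih (sub_nonneg.2 hy.2)]

end Convolution

/-- For `W_0,…,W_n` i.i.d. standard exponentials and `0 < q < 1`, `K_n = ∑_{i=0}^n q^i W_i`
satisfies `P(K_n > t) = ∑_{j=0}^n ((-1)^j q^{j(j+1)/2}/(φ_j(q)φ_{n-j}(q))) exp(-q^{-j} t)`. -/
theorem stmt2 {Ω : Type*} [MeasureSpace Ω] [IsProbabilityMeasure (ℙ : Measure Ω)]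
    (q : ℝ) (hq0 : 0 < q) (hq1 : q < 1) (n : ℕ) (W : ℕ → Ω → ℝ)
    (hWmeas : ∀ i, Measurable (W i))
    (hWindep : iIndepFun W ℙ)
    (hWlaw : ∀ i, Measure.map (W i) ℙ = expMeasure 1)
    (φ : ℕ → ℝ) (hφ : ∀ m, φ m = ∏ i ∈ Finset.Icc 1 m, (1 - q ^ i))
    (t : ℝ) (ht : 0 ≤ t) :
    (ℙ {ω | t < ∑ i ∈ Finset.range (n + 1), q ^ i * W i ω}).toReal =
      ∑ j ∈ Finset.range (n + 1),
        (-1 : ℝ) ^ j * q ^ (j * (j + 1) / 2) / (φ j * φ (n - j)) *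
          Real.exp (-(q ^ (-(j : ℤ)) * t)) := by
  obtain rfl : φ = qPochhammer q := funext hφ
  simp only [zpow_neg, zpow_natCast]
  exact measureReal_lt_sum_pow_mul hq0 hq1 hWmeas hWindep hWlaw n ht
end

section
/- Let A be a non-negative random variable and W an independent standard exponential random variable. Then for all s, z ≥ 0, P(A + W ∈ [s, s+z]) ≤ z · P(A ≤ s + z). -/
open MeasureTheory ProbabilityTheory

/-!
Conditioning on `A = a`, the probability is the exponential mass of `[s - a, s + z - a]`.
The exponential density is at most `1` and vanishes on `(-∞, 0)`, so this mass is at most `z`,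
and it is zero unless `a ≤ s + z`.
-/

lemma MeasureTheory.Measure.conv_apply {M : Type*} [AddMonoid M] [MeasurableSpace M]
    [MeasurableAdd₂ M] (μ ν : Measure M) [SFinite ν] {s : Set M} (hs : MeasurableSet s) :
    (μ ∗ ν) s = ∫⁻ x, ν ((x + ·) ⁻¹' s) ∂μ := by
  rw [Measure.conv, Measure.map_apply measurable_add hs, Measure.prod_apply (measurable_add hs)]
  rfl

lemma expMeasure_le_smul_volume {r : ℝ} (hr : 0 ≤ r) :
    expMeasure r ≤ ENNReal.ofReal r • volume := by
  rw [← withDensity_const]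
  refine withDensity_mono (.of_forall fun x ↦ ?_)
  change exponentialPDF r x ≤ ENNReal.ofReal r
  rw [exponentialPDF_eq]
  refine ENNReal.ofReal_le_ofReal ?_
  split_ifs with hx
  · exact mul_le_of_le_one_right hr (Real.exp_le_one_iff.2 (by nlinarith))
  · exact hr

lemma expMeasure_Iio_zero (r : ℝ) : expMeasure r (Set.Iio 0) = 0 := by
  rw [expMeasure, gammaMeasure, withDensity_apply _ measurableSet_Iio]
  exact lintegral_exponentialPDF_of_nonpos le_rfl

lemma expMeasure_one_Icc_sub_le_indicator (a s z : ℝ) :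
    expMeasure 1 (Set.Icc (s - a) (s + z - a)) ≤
      (Set.Iic (s + z)).indicator (fun _ ↦ ENNReal.ofReal z) a := by
  by_cases ha : a ≤ s + z
  · rw [Set.indicator_of_mem (Set.mem_Iic.2 ha)]
    calc expMeasure 1 (Set.Icc (s - a) (s + z - a))
        ≤ volume (Set.Icc (s - a) (s + z - a)) := by
          simpa using expMeasure_le_smul_volume zero_le_one (Set.Icc (s - a) (s + z - a))
      _ = ENNReal.ofReal z := by rw [Real.volume_Icc]; ring_nf
  · refine le_of_eq_of_le (measure_mono_null (fun w hw ↦ ?_) (expMeasure_Iio_zero 1)) zero_le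
    exact Set.mem_Iio.2 (by linarith [hw.2])

theorem stmt9_general {Ω : Type*} [MeasureSpace Ω] [IsProbabilityMeasure (ℙ : Measure Ω)]
    (A W : Ω → ℝ) (hA : Measurable A) (hW : Measurable W)
    (hWlaw : Measure.map W ℙ = expMeasure 1) (hindep : IndepFun A W ℙ)
    (s z : ℝ) :
    ℙ {ω | A ω + W ω ∈ Set.Icc s (s + z)} ≤ ENNReal.ofReal z * ℙ {ω | A ω ≤ s + z} := by
  calc ℙ {ω | A ω + W ω ∈ Set.Icc s (s + z)}
      = (Measure.map A ℙ ∗ expMeasure 1) (Set.Icc s (s + z)) := by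
        rw [← hWlaw, ← hindep.map_add_eq_map_conv_map hA hW,
          Measure.map_apply (hA.add hW) measurableSet_Icc]
        rfl
    _ = ∫⁻ a, expMeasure 1 (Set.Icc (s - a) (s + z - a)) ∂(Measure.map A ℙ) := by
        have := isProbabilityMeasure_expMeasure (r := 1) one_pos
        rw [Measure.conv_apply _ _ measurableSet_Icc]
        simp only [Set.preimage_const_add_Icc]
    _ ≤ ∫⁻ a, (Set.Iic (s + z)).indicator (fun _ ↦ ENNReal.ofReal z) a ∂(Measure.map A ℙ) :=
        lintegral_mono (expMeasure_one_Icc_sub_le_indicator · s z)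
    _ = ENNReal.ofReal z * ℙ {ω | A ω ≤ s + z} := by
        rw [lintegral_indicator_const measurableSet_Iic, Measure.map_apply hA measurableSet_Iic]
        rfl

/-- If `A` is a non-negative random variable and `W` an independent standard exponential,
then for all `s, z ≥ 0`, `P(A + W ∈ [s, s+z]) ≤ z · P(A ≤ s + z)`. -/
theorem stmt9 {Ω : Type*} [MeasureSpace Ω] [IsProbabilityMeasure (ℙ : Measure Ω)]
    (A W : Ω → ℝ) (hA : Measurable A) (hApos : ∀ ω, 0 ≤ A ω) (hW : Measurable W)
    (hWlaw : Measure.map W ℙ = expMeasure 1) (hindep : IndepFun A W ℙ)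
    (s z : ℝ) (hs : 0 ≤ s) (hz : 0 ≤ z) :
    ℙ {ω | A ω + W ω ∈ Set.Icc s (s + z)} ≤ ENNReal.ofReal z * ℙ {ω | A ω ≤ s + z} :=
  stmt9_general A W hA hW hWlaw hindep s z
end

section
/- Let E be a finite index set, let (A_e)_{e∈E} be identically distributed real random variables each with the law of a random variable A, let (B_e)_{e∈E} be real random variables independent of the family (A_e)_{e∈E} (but possibly dependent among themselves), and let A' be a copy of A independent of (B_e). Then for any reals (c_e), P(∩_{e∈E} {A_e + B_e > c_e}) ≤ P(∩_{e∈E} {A' + B_e > c_e}). -/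
/-!
Conditioning on `B = b` (legitimate on both sides by independence), it suffices to compare
`P(∀ e, A_e > t_e)` with `P(∀ e, A' > t_e)` for fixed thresholds `t_e = c_e - b_e`. If `e₀`
maximises `t`, the first event is contained in `{A_{e₀} > t_{e₀}}`, which has the same
probability as `{A' > t_{e₀}}`, and that event is exactly the second one.
-/

open MeasureTheory ProbabilityTheory

theorem ProbabilityTheory.IndepFun.measure_preimage_eq_lintegral {Ω α β : Type*}
    [MeasurableSpace Ω] [MeasurableSpace α] [MeasurableSpace β] {μ : Measure Ω}
    [IsFiniteMeasure μ] {X : Ω → α} {Y : Ω → β} (hX : AEMeasurable X μ) (hY : AEMeasurable Y μ)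
    (h : IndepFun X Y μ) {S : Set (α × β)} (hS : MeasurableSet S) :
    μ ((fun ω => (X ω, Y ω)) ⁻¹' S) = ∫⁻ y, μ (X ⁻¹' {x | (x, y) ∈ S}) ∂μ.map Y := by
  rw [← Measure.map_apply_of_aemeasurable (hX.prodMk hY) hS,
    (indepFun_iff_map_prod_eq_prod_map_map hX hY).mp h, Measure.prod_apply_symm hS]
  congr! 2 with y
  exact Measure.map_apply_of_aemeasurable hX (measurable_prodMk_right hS)

theorem measure_forall_lt_le_of_identDistrib {Ω Ω' E : Type*} [MeasurableSpace Ω]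
    [MeasurableSpace Ω'] [Finite E] {μ : Measure Ω} {μ' : Measure Ω'} [IsProbabilityMeasure μ]
    [IsProbabilityMeasure μ'] {A : E → Ω → ℝ} {A' : Ω' → ℝ}
    (hid : ∀ e, IdentDistrib (A e) A' μ μ') (t : E → ℝ) :
    μ {ω | ∀ e, t e < A e ω} ≤ μ' {ω | ∀ e, t e < A' ω} := by
  rcases isEmpty_or_nonempty E with hE | hE
  · simp
  obtain ⟨e₀, he₀⟩ := Finite.exists_max t
  calc μ {ω | ∀ e, t e < A e ω} ≤ μ (A e₀ ⁻¹' Set.Ioi (t e₀)) := measure_mono fun ω h => h e₀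
    _ = μ' (A' ⁻¹' Set.Ioi (t e₀)) := (hid e₀).measure_mem_eq measurableSet_Ioi
    _ = μ' {ω | ∀ e, t e < A' ω} := by
      congr 1
      ext ω
      exact ⟨fun h e => (he₀ e).trans_lt h, fun h => h e₀⟩

/-- For a finite index set `E`, identically distributed `(A_e)` each with the law of `A'`,
`(B_e)` independent of the family `(A_e)`, and `A'` a copy of `A` independent of `(B_e)`:
`P(∩_e {A_e + B_e > c_e}) ≤ P(∩_e {A' + B_e > c_e})`. -/
theorem stmt11 {Ω : Type*} [MeasureSpace Ω] [IsProbabilityMeasure (ℙ : Measure Ω)]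
    {E : Type*} [Fintype E] (A B : E → Ω → ℝ) (A' : Ω → ℝ)
    (hA : ∀ e, Measurable (A e)) (hB : ∀ e, Measurable (B e)) (hA' : Measurable A')
    (hid : ∀ e, Measure.map (A e) ℙ = Measure.map A' ℙ)
    (hindep : IndepFun (fun ω (e : E) => A e ω) (fun ω (e : E) => B e ω) ℙ)
    (hindep' : IndepFun A' (fun ω (e : E) => B e ω) ℙ)
    (c : E → ℝ) :
    ℙ {ω | ∀ e, c e < A e ω + B e ω} ≤ ℙ {ω | ∀ e, c e < A' ω + B e ω} := by
  have hAm : Measurable fun ω (e : E) => A e ω := measurable_pi_lambda _ hA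
  have hBm : Measurable fun ω (e : E) => B e ω := measurable_pi_lambda _ hB
  have hS : MeasurableSet {p : (E → ℝ) × (E → ℝ) | ∀ e, c e < p.1 e + p.2 e} := by
    measurability
  have hS' : MeasurableSet {p : ℝ × (E → ℝ) | ∀ e, c e < p.1 + p.2 e} := by measurability
  calc ℙ {ω | ∀ e, c e < A e ω + B e ω}
      = ∫⁻ b : E → ℝ, ℙ {ω | ∀ e, c e < A e ω + b e} ∂Measure.map (fun ω e => B e ω) ℙ :=
        hindep.measure_preimage_eq_lintegral hAm.aemeasurable hBm.aemeasurable hS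
    _ ≤ ∫⁻ b : E → ℝ, ℙ {ω | ∀ e, c e < A' ω + b e} ∂Measure.map (fun ω e => B e ω) ℙ := by
        refine lintegral_mono fun b => ?_
        simp only [← sub_lt_iff_lt_add]
        exact measure_forall_lt_le_of_identDistrib
          (fun e => ⟨(hA e).aemeasurable, hA'.aemeasurable, hid e⟩) _
    _ = ℙ {ω | ∀ e, c e < A' ω + B e ω} :=
        (hindep'.measure_preimage_eq_lintegral hA'.aemeasurable hBm.aemeasurable hS').symm
end

section
/- Let f_∞ denote the density of K_∞ = ∑_{i=0}^∞ q^i W_i (0 < q < 1, W_i i.i.d. standard exponentials) and suppose f_∞(s) ≤ C e^{−s} and P(K_∞ > M) ≤ C e^{−max(M,0)} for some constant C. Then ∫_0^∞ f_∞(s) P(K_∞ > L − qs) P(K_∞ > L − s) ds ≤ C' exp(−min{1/q, 2−q}·L) for all L > 0, where C' depends only on C and q. -/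
/-!
Bounding `f_∞` by `C e^{-s}` and both tail probabilities by `C e^{-max(·, 0)}`, the integrand
is at most `C³ exp(-s - (L - qs)⁺ - (L - s)⁺)`. Bounding `(L - qs)⁺` below by `L - qs` and
`(L - s)⁺` by `L - s` or by `0`, this exponent is at most
`-(2 - q)L + min(q(s - L), -(1 - q)(s - L))`, a two-sided exponential centred at `L` whose
integral is `(1/q + 1/(1 - q)) e^{-(2 - q)L}`. Finally `min(1/q, 2 - q) = 2 - q`.
-/

open MeasureTheory ProbabilityTheory Real Set

section TwoSidedExponential

variable {a b : ℝ}

lemma eqOn_exp_min_mul_Iic (ha : 0 < a) (hb : 0 < b) :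
    EqOn (fun x => exp (min (a * x) (-b * x))) (fun x => exp (a * x)) (Iic 0) := by
  intro x (hx : x ≤ 0)
  simp only [min_eq_left (by nlinarith : a * x ≤ -b * x)]

lemma eqOn_exp_min_mul_Ioi (ha : 0 < a) (hb : 0 < b) :
    EqOn (fun x => exp (min (a * x) (-b * x))) (fun x => exp (-b * x)) (Ioi 0) := by
  intro x (hx : 0 < x)
  simp only [min_eq_right (by nlinarith : -b * x ≤ a * x)]

lemma integrableOn_exp_min_mul_Iic (ha : 0 < a) (hb : 0 < b) :
    IntegrableOn (fun x => exp (min (a * x) (-b * x))) (Iic 0) :=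
  (integrableOn_congr_fun (eqOn_exp_min_mul_Iic ha hb) measurableSet_Iic).2
    (integrableOn_exp_mul_Iic ha 0)

lemma integrableOn_exp_min_mul_Ioi (ha : 0 < a) (hb : 0 < b) :
    IntegrableOn (fun x => exp (min (a * x) (-b * x))) (Ioi 0) :=
  (integrableOn_congr_fun (eqOn_exp_min_mul_Ioi ha hb) measurableSet_Ioi).2
    (integrableOn_exp_mul_Ioi (neg_lt_zero.2 hb) 0)

lemma integrable_exp_min_mul (ha : 0 < a) (hb : 0 < b) :
    Integrable (fun x => exp (min (a * x) (-b * x))) := by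
  rw [← integrableOn_univ, ← Iic_union_Ioi (a := (0 : ℝ))]
  exact (integrableOn_exp_min_mul_Iic ha hb).union (integrableOn_exp_min_mul_Ioi ha hb)

lemma integral_exp_min_mul (ha : 0 < a) (hb : 0 < b) :
    ∫ x, exp (min (a * x) (-b * x)) = 1 / a + 1 / b := by
  rw [← intervalIntegral.integral_Iic_add_Ioi (integrableOn_exp_min_mul_Iic ha hb)
      (integrableOn_exp_min_mul_Ioi ha hb),
    setIntegral_congr_fun measurableSet_Iic (eqOn_exp_min_mul_Iic ha hb),
    setIntegral_congr_fun measurableSet_Ioi (eqOn_exp_min_mul_Ioi ha hb),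
    integral_exp_mul_Iic ha, integral_exp_mul_Ioi (neg_lt_zero.2 hb)]
  simp only [mul_zero, exp_zero]
  ring

end TwoSidedExponential

lemma setIntegral_le_integral_of_le_of_nonneg {α : Type*} [MeasurableSpace α] {μ : Measure α}
    {f g : α → ℝ} {s : Set α} (hs : MeasurableSet s) (hg : Integrable g μ) (hg0 : 0 ≤ g)
    (hfg : ∀ x ∈ s, f x ≤ g x) :
    ∫ x in s, f x ∂μ ≤ ∫ x, g x ∂μ := by
  have hfg_int : ∫ x in s, f x ∂μ ≤ ∫ x in s, g x ∂μ := by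
    by_cases hf : IntegrableOn f s μ
    · exact setIntegral_mono_on hf hg.integrableOn hs hfg
    · rw [integral_undef hf]
      exact setIntegral_nonneg hs fun x _ => hg0 x
  exact hfg_int.trans (setIntegral_le_integral hg (Filter.Eventually.of_forall hg0))

lemma exp_neg_mul_exp_neg_max_mul_exp_neg_max_le (q L x : ℝ) :
    exp (-x) * exp (-max (L - q * x) 0) * exp (-max (L - x) 0) ≤
      exp (-(2 - q) * L) * exp (min (q * (x - L)) (-(1 - q) * (x - L))) := by
  simp only [← exp_add, exp_le_exp]
  have : -x - max (L - q * x) 0 - max (L - x) 0 + (2 - q) * L ≤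
      min (q * (x - L)) (-(1 - q) * (x - L)) :=
    le_min (by linarith [le_max_left (L - q * x) 0, le_max_left (L - x) 0])
      (by linarith [le_max_left (L - q * x) 0, le_max_right (L - x) 0])
  linarith

lemma two_sub_le_one_div {q : ℝ} (hq : 0 < q) : 2 - q ≤ 1 / q := by
  rw [le_div_iff₀ hq]
  nlinarith [sq_nonneg (1 - q)]

theorem stmt13_general {Ω : Type*} [MeasureSpace Ω]
    (q : ℝ) (hq0 : 0 < q) (hq1 : q < 1) (C : ℝ) :
    ∃ C' : ℝ, ∀ (W : ℕ → Ω → ℝ) (f : ℝ → ℝ),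
      (∀ i, Measurable (W i)) →
      iIndepFun W ℙ →
      (∀ i, Measure.map (W i) ℙ = expMeasure 1) →
      Measure.map (fun ω => ∑' i : ℕ, q ^ i * W i ω) ℙ =
        volume.withDensity (fun x => ENNReal.ofReal (f x)) →
      (∀ x : ℝ, f x ≤ C * Real.exp (-x)) →
      (∀ M : ℝ, (ℙ {ω | M < ∑' i : ℕ, q ^ i * W i ω}).toReal ≤ C * Real.exp (-(max M 0))) →
      ∀ L : ℝ, 0 < L →
        (∫ x in Set.Ioi (0 : ℝ),
            f x * (ℙ {ω | L - q * x < ∑' i : ℕ, q ^ i * W i ω}).toReal *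
              (ℙ {ω | L - x < ∑' i : ℕ, q ^ i * W i ω}).toReal) ≤
          C' * Real.exp (-(min (1 / q) (2 - q)) * L) := by
  have hq1' : 0 < 1 - q := sub_pos.2 hq1
  set c := max C 0
  refine ⟨c ^ 3 * (1 / q + 1 / (1 - q)), fun W f _ _ _ _ hf htail L _ => ?_⟩
  set K : Ω → ℝ := fun ω => ∑' i : ℕ, q ^ i * W i ω
  have hfc (x : ℝ) : f x ≤ c * exp (-x) :=
    (hf x).trans (by gcongr; exact le_max_left C 0)
  have htailc (M : ℝ) : (ℙ {ω | M < K ω}).toReal ≤ c * exp (-max M 0) :=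
    (htail M).trans (by gcongr; exact le_max_left C 0)
  set g : ℝ → ℝ := fun x =>
    c ^ 3 * exp (-(2 - q) * L) * exp (min (q * (x - L)) (-(1 - q) * (x - L)))
  have hg : Integrable g := ((integrable_exp_min_mul hq0 hq1').comp_sub_right L).const_mul _
  have hg_integral : ∫ x, g x = c ^ 3 * (1 / q + 1 / (1 - q)) * exp (-(2 - q) * L) := by
    rw [integral_const_mul, integral_sub_right_eq_self
      (fun y => exp (min (q * y) (-(1 - q) * y))) L, integral_exp_min_mul hq0 hq1']
    ring
  have hle_g (x : ℝ) :
      f x * (ℙ {ω | L - q * x < K ω}).toReal * (ℙ {ω | L - x < K ω}).toReal ≤ g x :=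
    calc _ ≤ (c * exp (-x)) * (c * exp (-max (L - q * x) 0)) * (c * exp (-max (L - x) 0)) := by
          gcongr
          exacts [hfc x, htailc _, htailc _]
      _ = c ^ 3 * (exp (-x) * exp (-max (L - q * x) 0) * exp (-max (L - x) 0)) := by ring
      _ ≤ c ^ 3 * (exp (-(2 - q) * L) * exp (min (q * (x - L)) (-(1 - q) * (x - L)))) :=
          mul_le_mul_of_nonneg_left
            (exp_neg_mul_exp_neg_max_mul_exp_neg_max_le q L x) (by positivity)
      _ = g x := by ring
  calc _ ≤ ∫ x, g x :=
        setIntegral_le_integral_of_le_of_nonneg measurableSet_Ioi hg (fun x => by positivity)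
          fun x _ => hle_g x
    _ = _ := by rw [hg_integral, min_eq_right (two_sub_le_one_div hq0)]

/-- If `f_∞` is the density of `K_∞ = ∑_{i=0}^∞ q^i W_i` with `f_∞(s) ≤ C e^{−s}` and
`P(K_∞ > M) ≤ C e^{−max(M,0)}`, then
`∫_0^∞ f_∞(s) P(K_∞ > L − qs) P(K_∞ > L − s) ds ≤ C' exp(−min{1/q, 2−q}·L)` for all `L > 0`,
where `C'` depends only on `C` and `q`. -/
theorem stmt13 {Ω : Type*} [MeasureSpace Ω] [IsProbabilityMeasure (ℙ : Measure Ω)]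
    (q : ℝ) (hq0 : 0 < q) (hq1 : q < 1) (C : ℝ) :
    ∃ C' : ℝ, ∀ (W : ℕ → Ω → ℝ) (f : ℝ → ℝ),
      (∀ i, Measurable (W i)) →
      iIndepFun W ℙ →
      (∀ i, Measure.map (W i) ℙ = expMeasure 1) →
      Measure.map (fun ω => ∑' i : ℕ, q ^ i * W i ω) ℙ =
        volume.withDensity (fun x => ENNReal.ofReal (f x)) →
      (∀ x : ℝ, f x ≤ C * Real.exp (-x)) →
      (∀ M : ℝ, (ℙ {ω | M < ∑' i : ℕ, q ^ i * W i ω}).toReal ≤ C * Real.exp (-(max M 0))) →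
      ∀ L : ℝ, 0 < L →
        (∫ x in Set.Ioi (0 : ℝ),
            f x * (ℙ {ω | L - q * x < ∑' i : ℕ, q ^ i * W i ω}).toReal *
              (ℙ {ω | L - x < ∑' i : ℕ, q ^ i * W i ω}).toReal) ≤
          C' * Real.exp (-(min (1 / q) (2 - q)) * L) :=
  stmt13_general q hq0 hq1 C
end
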